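/- For every monotone map φ : [n] → [1], one has f_n ∘ f_φ = f_n as endomorphisms of C(m+1+n); equivalently, for every basis tuple (i₀ < … < i_p) of C(m+1+n), f_n( f_n(i₀,…,i_{k_φ}) · (i_{k_φ+1},…,i_p) ) = f_n(i₀,…,i_p). In particular (taking φ constant of value 0) f_n ∘ f_n = f_n. -/

import Mathlib

/-!
We represent the (augmented) normalized chain complex `C(N)` of the standard `N`-simplex by the
free abelian group on the finite subsets of `{0,…,N}`, a subset of cardinality `p+1` standing for
the strictly increasing `(p+1)`-tuple of its elements (a `p`-chain); the differential is the
alternating sum of the tuples obtained by deleting one entry (and vanishes on `0`-chains), and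
the augmentation sends every `0`-chain basis element to `1` (and vanishes in higher degrees).
-/

noncomputable section

abbrev Ch (α : Type) := Finset α →₀ ℤ

/-- index of `a` in `s`: the number of smaller elements of `s`. -/
def idx {α : Type} [LinearOrder α] (s : Finset α) (a : α) : ℕ :=
  (s.filter (fun b => b < a)).card

/-- value of the simplicial differential on a basis tuple:
`d(i₀,…,i_p) = Σₖ (−1)^k (i₀,…,î_k,…,i_p)` for `p ≥ 1`, and `0` on `0`-chains. -/
def dAux {α : Type} [LinearOrder α] (s : Finset α) : Ch α :=
  if 2 ≤ s.card then
    ∑ a ∈ s, ((-1 : ℤ) ^ (idx s a)) • Finsupp.single (s.erase a) (1 : ℤ)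
  else 0

/-- the differential of `C(N)`. -/
def chD (α : Type) [LinearOrder α] : Ch α →ₗ[ℤ] Ch α :=
  Finsupp.lift _ ℤ _ dAux

/-- the augmentation of `C(N)`: `e(i₀) = 1` on `0`-chains, `0` in higher degrees. -/
def chE (α : Type) : Ch α →ₗ[ℤ] ℤ :=
  Finsupp.lift _ ℤ _ (fun s => if s.card = 1 then (1 : ℤ) else 0)

/-- The chain map `c(ψ) : C(N') → C(N)` induced by a (monotone) map `ψ`,
`(i₀,…,i_p) ↦ (ψ(i₀),…,ψ(i_p))`, with the convention that a tuple with a repeated entry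
denotes `0`. -/
def chMap {α β : Type} [DecidableEq β] (ψ : α → β) : Ch α →ₗ[ℤ] Ch β :=
  Finsupp.lift _ ℤ _ (fun s =>
    if (s.image ψ).card = s.card then Finsupp.single (s.image ψ) (1 : ℤ) else 0)

/-- the element `m` of `{0,…,m+1+n}`. -/
def elM (m n : ℕ) : Fin (m+1+n+1) := ⟨m, by omega⟩

/-- `f_n` on a basis tuple `(i₀ < … < i_p)`, following the case analysis of the paper
(expressed via the sets of entries `< m` and `> m`):
`f_n = id` if `i_p ≤ m` or `m ≤ i₀`; `f_n(i₀,i₁) = (i₀,m) + (m,i₁)` if `p = 1` and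
`i₀ < m < i₁`; `f_n(i₀,…,i_p) = (m,i₁,…,i_p)` if `p > 1` and `i₀ < m < i₁`;
`f_n(i₀,…,i_p) = (i₀,…,i_{p−1},m)` if `p > 1` and `i_{p−1} < m < i_p`; `f_n = 0` otherwise
(i.e. if `i₁ ≤ m ≤ i_{p−1}`). -/
def fnAux (m n : ℕ) (s : Finset (Fin (m+1+n+1))) : Ch (Fin (m+1+n+1)) :=
  let M := elM m n
  let lo := s.filter (fun i => i < M)
  let hi := s.filter (fun i => M < i)
  if lo.card = 0 ∨ hi.card = 0 then Finsupp.single s 1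
  else if lo.card = 1 ∧ hi.card = 1 ∧ M ∉ s then
    Finsupp.single (insert M lo) 1 + Finsupp.single (insert M hi) 1
  else if lo.card = 1 ∧ 2 ≤ hi.card ∧ M ∉ s then Finsupp.single (insert M hi) 1
  else if 2 ≤ lo.card ∧ hi.card = 1 ∧ M ∉ s then Finsupp.single (insert M lo) 1
  else 0

/-- the graded `ℤ`-linear endomorphism `f_n` of `C(m+1+n)`. -/
def fN (m n : ℕ) : Ch (Fin (m+1+n+1)) →ₗ[ℤ] Ch (Fin (m+1+n+1)) :=
  Finsupp.lift _ ℤ _ (fnAux m n)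

/-- `φ̄ : [m+1+n] → [1]`, extending `φ : [n] → [1]` by `0` on `{0,…,m}`. -/
def phibar (m n : ℕ) (φ : Fin (n+1) → Fin 2) : Fin (m+1+n+1) → Fin 2 := fun i =>
  if (i : ℕ) ≤ m then 0 else φ ⟨(i : ℕ) - (m + 1), by have := i.isLt; omega⟩

/-- concatenation on the right with the fixed tuple `t`, extended `ℤ`-bilinearly, with the
repeated-entry convention (a concatenation which is not strictly increasing is `0`). -/
def concatR {α : Type} [LinearOrder α] (t : Finset α) : Ch α →ₗ[ℤ] Ch α :=
  Finsupp.lift _ ℤ _ (fun u =>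
    if ∀ x ∈ u, ∀ y ∈ t, x < y then Finsupp.single (u ∪ t) (1 : ℤ) else 0)

/-- `f_φ` on a basis tuple `s`: writing `s` as the concatenation of its prefix
`s₀ = (i₀,…,i_{k_φ})` on which `φ̄` vanishes and its suffix `s₁ = (i_{k_φ+1},…,i_p)` on which
`φ̄` equals `1`, set `f_φ(s) = f_n(s₀)·s₁` (in particular `f_φ(s) = s` when `k_φ = −1` and
`f_φ(s) = f_n(s)` when `k_φ = p`). -/
def fPhiAux (m n : ℕ) (φ : Fin (n+1) → Fin 2) (s : Finset (Fin (m+1+n+1))) :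
    Ch (Fin (m+1+n+1)) :=
  concatR (s.filter (fun i => phibar m n φ i = 1))
    (fnAux m n (s.filter (fun i => phibar m n φ i = 0)))

/-- the graded `ℤ`-linear endomorphism `f_φ` of `C(m+1+n)`. -/
def fPhi (m n : ℕ) (φ : Fin (n+1) → Fin 2) :
    Ch (Fin (m+1+n+1)) →ₗ[ℤ] Ch (Fin (m+1+n+1)) :=
  Finsupp.lift _ ℤ _ (fPhiAux m n φ)


/-!
Write a basis tuple as `s = s₀ · s₁` with `s₁` the entries where `φ̄ = 1`; since `φ̄` is monotone
and vanishes on `{0,…,m}`, every entry of `s₁` lies above `m` and above all of `s₀`. For any such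
split `u · t` one has `f_n(f_n(u) · t) = f_n(u · t)`: when `u` lies on one side of `m`, `f_n(u) = u`;
when `m ∈ u` has entries on both sides, both sides vanish; otherwise the terms `(m, hi u)` and
`(lo u, m)` of `f_n(u)` lie on one side of `m`, and appending `t` turns the first into the term
`(m, hi (u · t))` of `f_n(u · t)` while, for `t ≠ ∅`, the second becomes a tuple killed by `f_n`
and the matching term of `f_n(u · t)` disappears too. Idempotence is the case `φ ≡ 0`, where
`f_φ = f_n`.
-/

theorem Finsupp.lift_apply_single {R M X : Type*} [Semiring R] [AddCommMonoid M] [Module R M]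
    (f : X → M) (a : X) (b : R) : Finsupp.lift M R X f (Finsupp.single a b) = b • f a := by
  rw [Finsupp.lift_apply, Finsupp.sum_single_index (zero_smul R (f a))]

lemma lt_of_monotone_fin_two {α : Type*} [LinearOrder α] {ψ : α → Fin 2} (hψ : Monotone ψ)
    {x y : α} (hx : ψ x = 0) (hy : ψ y = 1) : x < y :=
  lt_of_not_ge fun hyx => by simpa [hx, hy] using hψ hyx

namespace Finset

variable {α : Type*} [LinearOrder α]

lemma filter_lt_union_of_lt {c : α} {u t : Finset α} (ht : ∀ y ∈ t, c < y) :
    (u ∪ t).filter (· < c) = u.filter (· < c) := by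
  rw [filter_union, filter_false_of_mem fun y hy => (ht y hy).not_gt, union_empty]

lemma filter_gt_union_of_lt {c : α} {u t : Finset α} (ht : ∀ y ∈ t, c < y) :
    (u ∪ t).filter (c < ·) = u.filter (c < ·) ∪ t := by
  rw [filter_union, filter_true_of_mem ht]

end Finset

section concatR

variable {α : Type} [LinearOrder α]

lemma concatR_single {t u : Finset α} (h : ∀ x ∈ u, ∀ y ∈ t, x < y) :
    concatR t (Finsupp.single u 1) = Finsupp.single (u ∪ t) 1 := by
  rw [concatR, Finsupp.lift_apply_single, one_smul, if_pos h]

lemma concatR_empty : concatR (∅ : Finset α) = LinearMap.id :=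
  Finsupp.lhom_ext fun u b => by simp [concatR]

end concatR

section fN

variable {m n : ℕ}

local notation "𝐦" => elM m n

lemma fN_single (s : Finset (Fin (m+1+n+1))) : fN m n (Finsupp.single s 1) = fnAux m n s := by
  rw [fN, Finsupp.lift_apply_single, one_smul]

lemma fnAux_of_le (s : Finset (Fin (m+1+n+1))) (h : (∀ i ∈ s, 𝐦 ≤ i) ∨ ∀ i ∈ s, i ≤ 𝐦) :
    fnAux m n s = Finsupp.single s 1 := by
  refine if_pos ?_
  simp only [Finset.card_eq_zero, Finset.filter_eq_empty_iff, not_lt]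
  exact h

lemma fnAux_of_mem (s : Finset (Fin (m+1+n+1))) (hM : 𝐦 ∈ s)
    (hlo : (s.filter (· < 𝐦)).Nonempty) (hhi : (s.filter (𝐦 < ·)).Nonempty) :
    fnAux m n s = 0 := by
  have := hlo.card_pos
  have := hhi.card_pos
  simp only [fnAux]
  rw [if_neg (by omega), if_neg (by tauto), if_neg (by tauto), if_neg (by tauto)]

lemma fnAux_of_not_mem (s : Finset (Fin (m+1+n+1))) (hM : 𝐦 ∉ s)
    (hlo : (s.filter (· < 𝐦)).Nonempty) (hhi : (s.filter (𝐦 < ·)).Nonempty) :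
    fnAux m n s =
      (if (s.filter (· < 𝐦)).card = 1 then
        Finsupp.single (insert 𝐦 (s.filter (𝐦 < ·))) 1 else 0) +
      (if (s.filter (𝐦 < ·)).card = 1 then
        Finsupp.single (insert 𝐦 (s.filter (· < 𝐦))) 1 else 0) := by
  have := hlo.card_pos
  have := hhi.card_pos
  simp only [fnAux]
  rw [if_neg (by omega)]
  by_cases h1 : (s.filter (· < 𝐦)).card = 1 <;>
    by_cases h2 : (s.filter (𝐦 < ·)).card = 1 <;>
    simp [h1, h2, hM, add_comm] <;> omega

lemma fN_concatR_single_of_le {a t : Finset (Fin (m+1+n+1))} (ha : ∀ i ∈ a, 𝐦 ≤ i)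
    (ht : ∀ y ∈ t, 𝐦 < y) (hat : ∀ x ∈ a, ∀ y ∈ t, x < y) :
    fN m n (concatR t (Finsupp.single a 1)) = Finsupp.single (a ∪ t) 1 := by
  rw [concatR_single hat, fN_single, fnAux_of_le _ (Or.inl fun i hi => ?_)]
  exact (Finset.mem_union.1 hi).elim (ha i) fun hi => (ht i hi).le

lemma fN_concatR_single_of_mem {a t : Finset (Fin (m+1+n+1))} (hM : 𝐦 ∈ a)
    (hlo : (a.filter (· < 𝐦)).Nonempty) (ht : ∀ y ∈ t, 𝐦 < y) (ht_ne : t.Nonempty)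
    (hat : ∀ x ∈ a, ∀ y ∈ t, x < y) :
    fN m n (concatR t (Finsupp.single a 1)) = 0 := by
  rw [concatR_single hat, fN_single, fnAux_of_mem _ (Finset.mem_union_left _ hM)
    (hlo.mono (Finset.filter_subset_filter _ Finset.subset_union_left))]
  obtain ⟨y, hy⟩ := ht_ne
  exact ⟨y, Finset.mem_filter.2 ⟨Finset.mem_union_right _ hy, ht y hy⟩⟩

lemma fN_concatR_fnAux_of_not_mem {u t : Finset (Fin (m+1+n+1))} (ht : ∀ y ∈ t, 𝐦 < y)
    (hut : ∀ x ∈ u, ∀ y ∈ t, x < y) (hM : 𝐦 ∉ u)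
    (hlo : (u.filter (· < 𝐦)).Nonempty) (hhi : (u.filter (𝐦 < ·)).Nonempty) :
    fN m n (concatR t (fnAux m n u)) = fnAux m n (u ∪ t) := by
  have hM' : 𝐦 ∉ u ∪ t := by
    simpa [hM] using fun h => (ht 𝐦 h).false
  rw [fnAux_of_not_mem u hM hlo hhi, fnAux_of_not_mem _ hM'
    (by rwa [Finset.filter_lt_union_of_lt ht])
    (by rw [Finset.filter_gt_union_of_lt ht]; exact hhi.mono Finset.subset_union_left),
    Finset.filter_lt_union_of_lt ht, Finset.filter_gt_union_of_lt ht, map_add, map_add]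
  congr 1
  · split_ifs
    · rw [fN_concatR_single_of_le _ ht (by simpa using ⟨ht, fun x hx _ => hut x hx⟩),
        Finset.insert_union]
      simpa using fun i _ hi => hi.le
    · simp
  rcases t.eq_empty_or_nonempty with rfl | ht_ne
  · simp only [concatR_empty, Finset.union_empty, LinearMap.id_apply]
    split_ifs
    · rw [fN_single, fnAux_of_le _ (Or.inr ?_)]
      simpa using fun i _ hi => hi.le
    · simp
  -- For `t ≠ ∅` both second terms vanish: `(lo u, m) · t` contains `m` and has entries on both
  -- sides of it, while `hi (u · t)` has at least two entries.
  have hcard : (u.filter (𝐦 < ·) ∪ t).card ≠ 1 := by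
    have hdisj : Disjoint (u.filter (𝐦 < ·)) t := Finset.disjoint_left.2 fun x hx hxt =>
      (hut x (Finset.mem_filter.1 hx).1 x hxt).false
    rw [Finset.card_union_of_disjoint hdisj]
    have := hhi.card_pos
    have := ht_ne.card_pos
    omega
  rw [if_neg hcard]
  split_ifs
  · exact fN_concatR_single_of_mem (Finset.mem_insert_self _ _)
      (by simpa [Finset.filter_insert, Finset.filter_filter] using hlo) ht ht_ne
      (by simpa using ⟨ht, fun x hx _ => hut x hx⟩)
  · simp

lemma fN_concatR_fnAux {u t : Finset (Fin (m+1+n+1))} (ht : ∀ y ∈ t, 𝐦 < y)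
    (hut : ∀ x ∈ u, ∀ y ∈ t, x < y) :
    fN m n (concatR t (fnAux m n u)) = fnAux m n (u ∪ t) := by
  by_cases hside : (∀ i ∈ u, 𝐦 ≤ i) ∨ ∀ i ∈ u, i ≤ 𝐦
  · rw [fnAux_of_le u hside, concatR_single hut, fN_single]
  obtain ⟨hlo, hhi⟩ : (u.filter (· < 𝐦)).Nonempty ∧ (u.filter (𝐦 < ·)).Nonempty := by
    push Not at hside
    simpa [Finset.filter_nonempty_iff] using hside
  by_cases hM : 𝐦 ∈ u
  · rw [fnAux_of_mem u hM hlo hhi, map_zero, map_zero, fnAux_of_mem _ (Finset.mem_union_left t hM)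
      (by rwa [Finset.filter_lt_union_of_lt ht])
      (by rw [Finset.filter_gt_union_of_lt ht]; exact hhi.mono Finset.subset_union_left)]
  · exact fN_concatR_fnAux_of_not_mem ht hut hM hlo hhi

lemma phibar_monotone (φ : Fin (n+1) →o Fin 2) : Monotone (phibar m n φ) := by
  intro i j hij
  have hij' : (i : ℕ) ≤ j := hij
  unfold phibar
  split_ifs with hi hj hj
  · exact le_rfl
  · exact Fin.zero_le _
  · omega
  · exact φ.monotone (Fin.mk_le_mk.2 (by omega))

lemma elM_lt_of_phibar_eq_one {φ : Fin (n+1) →o Fin 2} {i : Fin (m+1+n+1)}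
    (hi : phibar m n φ i = 1) : 𝐦 < i :=
  lt_of_monotone_fin_two (phibar_monotone φ) (by simp [phibar, elM]) hi

lemma fN_fPhiAux (φ : Fin (n+1) →o Fin 2) (s : Finset (Fin (m+1+n+1))) :
    fN m n (fPhiAux m n φ s) = fnAux m n s := by
  rw [fPhiAux, fN_concatR_fnAux (fun y hy => elM_lt_of_phibar_eq_one (Finset.mem_filter.1 hy).2)
    (fun x hx y hy => lt_of_monotone_fin_two (phibar_monotone φ) (Finset.mem_filter.1 hx).2
      (Finset.mem_filter.1 hy).2)]
  congr 1
  ext i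
  simp only [Finset.mem_union, Finset.mem_filter]
  generalize phibar m n φ i = j
  fin_cases j <;> simp

lemma fPhi_const_zero : fPhi m n (fun _ => 0) = fN m n := by
  have : phibar m n (fun _ => 0) = fun _ => 0 := by
    funext i
    simp [phibar]
  refine Finsupp.lhom_ext fun s b => ?_
  simp [fPhi, fN, fPhiAux, this, concatR_empty]

end fN

/-- STATEMENT 15: for every monotone `φ : [n] → [1]`, `f_n ∘ f_φ = f_n`; in particular
(taking `φ` constant of value `0`) `f_n ∘ f_n = f_n`. -/
theorem fN_comp_fPhi (m n : ℕ) (φ : Fin (n+1) →o Fin 2) :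
    (fN m n).comp (fPhi m n ⇑φ) = fN m n ∧ (fN m n).comp (fN m n) = fN m n := by
  have key (ψ : Fin (n+1) →o Fin 2) : (fN m n).comp (fPhi m n ψ) = fN m n :=
    Finsupp.lhom_ext fun s b => by
      rw [LinearMap.comp_apply, fPhi, Finsupp.lift_apply_single, map_smul, fN_fPhiAux, fN,
        Finsupp.lift_apply_single]
  have fPhi_const : fPhi m n (OrderHom.const _ 0) = fN m n := fPhi_const_zero
  exact ⟨key φ, fPhi_const ▸ key (OrderHom.const _ 0)⟩

end
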